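/- Let p and l be distinct odd primes. The group Γ = ψ(Γ̃) is commutative transitive: for all a, b, c ∈ Γ with a, b, c ≠ 1, if ab = ba and bc = cb, then ac = ca. -/

import Mathlib

open Quaternion Matrix
open scoped Classical

noncomputable section

/-- The set `Γ̃` of integer quaternions with norm `p^r l^s` and the appropriate
parity conditions. -/
def GammaTilde (p l : ℕ) : Set ℍ[ℤ] :=
  {x | (∃ r s : ℕ, Quaternion.normSq x = (p : ℤ) ^ r * (l : ℤ) ^ s) ∧
       (Quaternion.normSq x % 4 = 1 →
          Odd x.re ∧ Even x.imI ∧ Even x.imJ ∧ Even x.imK) ∧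
       (Quaternion.normSq x % 4 = 3 →
          Even x.imI ∧ Odd x.re ∧ Odd x.imJ ∧ Odd x.imK)}

/-- The set `Ã ⊆ Γ̃` of elements of positive real part and norm `p`. -/
def Atilde (p l : ℕ) : Set ℍ[ℤ] :=
  {x | x ∈ GammaTilde p l ∧ 0 < x.re ∧ Quaternion.normSq x = (p : ℤ)}

/-- The set `B̃ ⊆ Γ̃` of elements of positive real part and norm `l`. -/
def Btilde (p l : ℕ) : Set ℍ[ℤ] :=
  {y | y ∈ GammaTilde p l ∧ 0 < y.re ∧ Quaternion.normSq y = (l : ℤ)}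

/-- The projective general linear group `PGL₂(K)`: `GL₂(K)` modulo its center. -/
abbrev PGL2 (K : Type*) [Field K] : Type _ :=
  GL (Fin 2) K ⧸ Subgroup.center (GL (Fin 2) K)

/-- The matrix `M_{c,d}(x)` associated to an integer quaternion `x`. -/
def Mcd {K : Type*} [Field K] (c d : K) (x : ℍ[ℤ]) : Matrix (Fin 2) (Fin 2) K :=
  !![(x.re : K) + (x.imI : K) * c + (x.imK : K) * d,
     -(x.imI : K) * d + (x.imJ : K) + (x.imK : K) * c;
     -(x.imI : K) * d - (x.imJ : K) + (x.imK : K) * c,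
     (x.re : K) - (x.imI : K) * c - (x.imK : K) * d]

lemma det_Mcd {K : Type*} [Field K] {c d : K} (hcd : c ^ 2 + d ^ 2 + 1 = 0)
    (x : ℍ[ℤ]) : (Mcd c d x).det = ((Quaternion.normSq x : ℤ) : K) := by
  rw [Quaternion.normSq_def']
  rw [Mcd, Matrix.det_fin_two_of]
  push_cast
  linear_combination (-(x.imI : K) ^ 2 - (x.imK : K) ^ 2) * hcd

lemma det_Mcd_ne_zero {K : Type*} [Field K] [CharZero K] {c d : K}
    (hcd : c ^ 2 + d ^ 2 + 1 = 0) {x : ℍ[ℤ]} (hx : x ≠ 0) :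
    (Mcd c d x).det ≠ 0 := by
  rw [det_Mcd hcd]
  exact_mod_cast Quaternion.normSq_ne_zero.mpr hx

/-- The image of a nonzero integer quaternion in `GL₂(K)` (junk value `1` at `x = 0`). -/
def psiGL {K : Type*} [Field K] [CharZero K] (c d : K) (hcd : c ^ 2 + d ^ 2 + 1 = 0)
    (x : ℍ[ℤ]) : GL (Fin 2) K :=
  if hx : x = 0 then 1
  else Matrix.GeneralLinearGroup.mkOfDetNeZero (Mcd c d x) (det_Mcd_ne_zero hcd hx)

variable (p l : ℕ) [Fact p.Prime] [Fact l.Prime]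

/-- The map `ψ : ℍ(ℤ) → PGL₂(ℚ_p) × PGL₂(ℚ_l)` (with junk value at `0`). -/
def psi (cp dp : ℚ_[p]) (cl dl : ℚ_[l])
    (hp : cp ^ 2 + dp ^ 2 + 1 = 0) (hl : cl ^ 2 + dl ^ 2 + 1 = 0)
    (x : ℍ[ℤ]) : PGL2 ℚ_[p] × PGL2 ℚ_[l] :=
  (QuotientGroup.mk (psiGL cp dp hp x), QuotientGroup.mk (psiGL cl dl hl x))

/-- The group `Γ = ψ(Γ̃)`, as the subgroup of `PGL₂(ℚ_p) × PGL₂(ℚ_l)` generated by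
the image `ψ(Γ̃)` (this image is itself closed under multiplication and inverses,
so it coincides with the generated subgroup). -/
def Gamma (cp dp : ℚ_[p]) (cl dl : ℚ_[l])
    (hp : cp ^ 2 + dp ^ 2 + 1 = 0) (hl : cl ^ 2 + dl ^ 2 + 1 = 0) :
    Subgroup (PGL2 ℚ_[p] × PGL2 ℚ_[l]) :=
  Subgroup.closure (psi p l cp dp cl dl hp hl '' GammaTilde p l)

/-- The subgroup `Γ_p = ⟨ψ(Ã)⟩`. -/
def GammaP (cp dp : ℚ_[p]) (cl dl : ℚ_[l])
    (hp : cp ^ 2 + dp ^ 2 + 1 = 0) (hl : cl ^ 2 + dl ^ 2 + 1 = 0) :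
    Subgroup (PGL2 ℚ_[p] × PGL2 ℚ_[l]) :=
  Subgroup.closure (psi p l cp dp cl dl hp hl '' Atilde p l)

/-- The subgroup `Γ_l = ⟨ψ(B̃)⟩`. -/
def GammaL (cp dp : ℚ_[p]) (cl dl : ℚ_[l])
    (hp : cp ^ 2 + dp ^ 2 + 1 = 0) (hl : cl ^ 2 + dl ^ 2 + 1 = 0) :
    Subgroup (PGL2 ℚ_[p] × PGL2 ℚ_[l]) :=
  Subgroup.closure (psi p l cp dp cl dl hp hl '' Btilde p l)

/-!
Every element of `Γ` is `ψ(x)` for an integer quaternion `x` congruent to `1` or `1 + j + k`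
modulo `2`: these quaternions form a monoid, closed under conjugation, that contains `Γ̃`, and they
have odd real part. If `ψ(x)` and `ψ(y)` commute, then `M(y x) = ±M(x y)`, and the sign `-1` would
force `Re x = 0`; so `x` and `y` commute in `ℍ(ℤ)`, i.e. their imaginary parts are parallel. As
`b ≠ 1`, the imaginary part of the middle quaternion is nonzero, and being parallel to a fixed
nonzero vector is a transitive relation.
-/
section CrossProduct

variable {R : Type*} [CommRing R]

theorem dot_self_smul_eq_of_cross_eq_zero {u v : Fin 3 → R} (h : u ⨯₃ v = 0) :
    (v ⬝ᵥ v) • u = (u ⬝ᵥ v) • v := by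
  rw [← sub_eq_zero, ← cross_cross_eq_smul_sub_smul', h, map_zero]

theorem cross_eq_zero_trans [LinearOrder R] [IsStrictOrderedRing R] {u v w : Fin 3 → R}
    (hv : v ≠ 0) (huv : u ⨯₃ v = 0) (hwv : w ⨯₃ v = 0) : u ⨯₃ w = 0 := by
  have hvv : v ⬝ᵥ v ≠ 0 := dotProduct_self_eq_zero.not.mpr hv
  have key : (v ⬝ᵥ v) • (v ⬝ᵥ v) • u ⨯₃ w = ((u ⬝ᵥ v) * (w ⬝ᵥ v)) • v ⨯₃ v := by
    rw [← LinearMap.map_smul₂, ← map_smul, dot_self_smul_eq_of_cross_eq_zero huv,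
      dot_self_smul_eq_of_cross_eq_zero hwv, LinearMap.map_smul₂, map_smul, smul_smul]
  rwa [cross_self, smul_zero, smul_eq_zero_iff_right hvv, smul_eq_zero_iff_right hvv] at key

end CrossProduct

namespace Quaternion

variable {R : Type*} [CommRing R]

def imVec (x : ℍ[R]) : Fin 3 → R := ![x.imI, x.imJ, x.imK]

theorem imVec_eq_zero_iff {x : ℍ[R]} : imVec x = 0 ↔ x.im = 0 := by
  simp [imVec, Quaternion.ext_iff]

theorem commute_iff_cross_eq_zero [NoZeroDivisors R] [CharZero R] {x y : ℍ[R]} :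
    Commute x y ↔ imVec x ⨯₃ imVec y = 0 := by
  simp only [commute_iff_eq, Quaternion.ext_iff, imVec, cross_apply, re_mul, imI_mul,
    imJ_mul, imK_mul, Matrix.cons_eq_zero_iff, Matrix.zero_empty, and_true, Matrix.cons_val]
  refine ⟨fun ⟨_, h₁, h₂, h₃⟩ ↦ ⟨?_, ?_, ?_⟩, fun ⟨h₁, h₂, h₃⟩ ↦ ⟨by ring, ?_, ?_, ?_⟩⟩
  · exact mul_left_cancel₀ two_ne_zero (by linear_combination h₁)
  · exact mul_left_cancel₀ two_ne_zero (by linear_combination h₂)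
  · exact mul_left_cancel₀ two_ne_zero (by linear_combination h₃)
  · linear_combination 2 * h₁
  · linear_combination 2 * h₂
  · linear_combination 2 * h₃

theorem commute_trans_of_im_ne_zero [LinearOrder R] [IsStrictOrderedRing R] {x y z : ℍ[R]}
    (hy : y.im ≠ 0) (hxy : Commute x y) (hyz : Commute y z) : Commute x z :=
  commute_iff_cross_eq_zero.mpr <| cross_eq_zero_trans (imVec_eq_zero_iff.not.mpr hy)
    (commute_iff_cross_eq_zero.mp hxy) (commute_iff_cross_eq_zero.mp hyz.symm)

theorem re_eq_zero_of_mul_eq_neg_mul [LinearOrder R] [IsStrictOrderedRing R] {x y : ℍ[R]}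
    (hy : y ≠ 0) (h : x * y = -(y * x)) : x.re = 0 := by
  obtain ⟨h0, h1, h2, h3⟩ := Quaternion.ext_iff.mp h
  simp only [re_mul, imI_mul, imJ_mul, imK_mul, re_neg, imI_neg, imJ_neg, imK_neg] at h0 h1 h2 h3
  -- `Re ((x y + y x) ȳ) = 2 Re x |y|²`
  have key : 2 * x.re * normSq y = 0 := by
    rw [normSq_def']
    linear_combination y.re * h0 + y.imI * h1 + y.imJ * h2 + y.imK * h3
  simpa [normSq_eq_zero, hy] using key

end Quaternion

section MatrixModel

variable {K : Type*} [Field K] {c d : K}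

lemma Mcd_mul (hcd : c ^ 2 + d ^ 2 + 1 = 0) (x y : ℍ[ℤ]) :
    Mcd c d (x * y) = Mcd c d x * Mcd c d y := by
  ext i j
  fin_cases i <;> fin_cases j <;>
    simp [Mcd, Matrix.mul_apply, Fin.sum_univ_two, re_mul, imI_mul, imJ_mul, imK_mul]
  · linear_combination (-((x.imI : K) * y.imI + (x.imK : K) * y.imK)) * hcd
  · linear_combination ((x.imK : K) * y.imI - (x.imI : K) * y.imK) * hcd
  · linear_combination ((x.imI : K) * y.imK - (x.imK : K) * y.imI) * hcd
  · linear_combination (-((x.imI : K) * y.imI + (x.imK : K) * y.imK)) * hcd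

def McdHom (hcd : c ^ 2 + d ^ 2 + 1 = 0) : ℍ[ℤ] →+* Matrix (Fin 2) (Fin 2) K where
  toFun := Mcd c d
  map_one' := by ext i j; fin_cases i <;> fin_cases j <;> simp [Mcd]
  map_zero' := by ext i j; fin_cases i <;> fin_cases j <;> simp [Mcd]
  map_add' x y := by ext i j; fin_cases i <;> fin_cases j <;> simp [Mcd] <;> ring
  map_mul' := Mcd_mul hcd

lemma McdHom_apply (hcd : c ^ 2 + d ^ 2 + 1 = 0) (x : ℍ[ℤ]) : McdHom hcd x = Mcd c d x := rfl

lemma McdHom_injective [CharZero K] (hcd : c ^ 2 + d ^ 2 + 1 = 0) :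
    Function.Injective (McdHom hcd) := by
  refine (injective_iff_map_eq_zero _).mpr fun x hx ↦ ?_
  have := det_Mcd hcd x
  rw [← McdHom_apply hcd, hx, Matrix.det_zero] at this
  exact normSq_eq_zero.mp (by exact_mod_cast this.symm)

end MatrixModel

namespace Matrix.GeneralLinearGroup

variable {n K : Type*} [Fintype n] [DecidableEq n] [Field K]

lemma exists_val_eq_smul_of_mk_eq {g h : GL n K}
    (hgh : (QuotientGroup.mk g : GL n K ⧸ Subgroup.center (GL n K)) = QuotientGroup.mk h) :
    ∃ μ : K, (h : Matrix n n K) = μ • (g : Matrix n n K) := by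
  obtain ⟨μ, hμ⟩ := mem_center_iff_val_mem_range_scalar.mp (QuotientGroup.eq.mp hgh)
  refine ⟨μ, ?_⟩
  rw [← mul_inv_cancel_left g h, Units.val_mul, ← hμ, scalar_apply, ← smul_one_eq_diagonal,
    Matrix.mul_smul, Matrix.mul_one]

end Matrix.GeneralLinearGroup

section PsiGL

variable {K : Type*} [Field K] [CharZero K] {c d : K} (hcd : c ^ 2 + d ^ 2 + 1 = 0)

lemma psiGL_val {x : ℍ[ℤ]} (hx : x ≠ 0) :
    (psiGL c d hcd x : Matrix (Fin 2) (Fin 2) K) = Mcd c d x := by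
  rw [psiGL, dif_neg hx]
  rfl

lemma psiGL_mul {x y : ℍ[ℤ]} (hx : x ≠ 0) (hy : y ≠ 0) :
    psiGL c d hcd (x * y) = psiGL c d hcd x * psiGL c d hcd y := by
  ext : 1
  rw [Units.val_mul, psiGL_val hcd (mul_ne_zero hx hy), psiGL_val hcd hx, psiGL_val hcd hy,
    Mcd_mul hcd]

lemma mk_psiGL_intCast {n : ℤ} (hn : n ≠ 0) :
    (QuotientGroup.mk (psiGL c d hcd n) : PGL2 K) = 1 := by
  rw [QuotientGroup.eq_one_iff, Matrix.GeneralLinearGroup.mem_center_iff_val_mem_range_scalar]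
  refine ⟨n, ?_⟩
  have hn' : (n : ℍ[ℤ]) ≠ 0 := fun h ↦ hn (by simpa using congrArg QuaternionAlgebra.re h)
  rw [map_intCast, psiGL_val hcd hn', ← McdHom_apply hcd, map_intCast]

lemma mk_psiGL_star {x : ℍ[ℤ]} (hx : x ≠ 0) :
    (QuotientGroup.mk (psiGL c d hcd (star x)) : PGL2 K)
      = (QuotientGroup.mk (psiGL c d hcd x))⁻¹ := by
  refine eq_inv_of_mul_eq_one_left ?_
  rw [← QuotientGroup.mk_mul, ← psiGL_mul hcd (star_ne_zero.mpr hx) hx, star_mul_self]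
  exact mk_psiGL_intCast hcd (normSq_ne_zero.mpr hx)

/-- Commuting in `PGL₂` only says that `M(y x) = μ M(x y)`; taking determinants gives `μ = ±1`. -/
lemma mul_eq_or_eq_neg_of_commute_mk_psiGL {x y : ℍ[ℤ]} (hx : x ≠ 0) (hy : y ≠ 0)
    (h : Commute (QuotientGroup.mk (psiGL c d hcd x) : PGL2 K)
      (QuotientGroup.mk (psiGL c d hcd y))) :
    y * x = x * y ∨ y * x = -(x * y) := by
  rw [commute_iff_eq, ← QuotientGroup.mk_mul, ← QuotientGroup.mk_mul, ← psiGL_mul hcd hx hy,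
    ← psiGL_mul hcd hy hx] at h
  obtain ⟨μ, hμ⟩ := Matrix.GeneralLinearGroup.exists_val_eq_smul_of_mk_eq h
  rw [psiGL_val hcd (mul_ne_zero hy hx), psiGL_val hcd (mul_ne_zero hx hy)] at hμ
  have hμ2 : μ ^ 2 = 1 := by
    have hdet := congrArg Matrix.det hμ
    rw [det_smul, det_Mcd hcd, det_Mcd hcd, Fintype.card_fin, map_mul, map_mul,
      mul_comm (normSq y)] at hdet
    have hN : ((normSq x * normSq y : ℤ) : K) ≠ 0 := by
      exact_mod_cast mul_ne_zero (normSq_ne_zero.mpr hx) (normSq_ne_zero.mpr hy)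
    exact mul_right_cancel₀ hN (by rw [one_mul]; exact hdet.symm)
  rcases sq_eq_one_iff.mp hμ2 with rfl | rfl
  · exact .inl (McdHom_injective hcd (by simpa only [McdHom_apply, one_smul] using hμ))
  · refine .inr (McdHom_injective hcd ?_)
    rw [map_neg]
    simpa only [McdHom_apply, neg_one_smul] using hμ

lemma commute_of_commute_mk_psiGL {x y : ℍ[ℤ]} (hx : x.re ≠ 0) (hy : y ≠ 0)
    (h : Commute (QuotientGroup.mk (psiGL c d hcd x) : PGL2 K)
      (QuotientGroup.mk (psiGL c d hcd y))) :
    Commute x y := by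
  have hx0 : x ≠ 0 := by rintro rfl; exact hx rfl
  rcases mul_eq_or_eq_neg_of_commute_mk_psiGL hcd hx0 hy h with hyx | hyx
  · exact hyx.symm
  · exact absurd (re_eq_zero_of_mul_eq_neg_mul hy (neg_eq_iff_eq_neg.mp hyx.symm)) hx

end PsiGL

namespace Quaternion

/-- The integer quaternions congruent to `1` or to `1 + j + k` modulo `2`. -/
def parityMonoid : Submonoid ℍ[ℤ] where
  carrier := {x | Odd x.re ∧ Even x.imI ∧ Even (x.imJ + x.imK)}
  one_mem' := by simp
  mul_mem' := by
    rintro x y ⟨hx₀, hx₁, hx₂₃⟩ ⟨hy₀, hy₁, hy₂₃⟩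
    rw [← Int.not_even_iff_odd] at hx₀ hy₀
    rw [Int.even_add, iff_comm] at hx₂₃ hy₂₃
    simp [← Int.not_even_iff_odd, re_mul, imI_mul, imJ_mul, imK_mul, Int.even_add, Int.even_sub,
      Int.even_mul, hx₀, hx₁, hy₀, hy₁, hx₂₃, hy₂₃]
    tauto

lemma star_mem_parityMonoid {x : ℍ[ℤ]} (hx : x ∈ parityMonoid) : star x ∈ parityMonoid := by
  obtain ⟨h₀, h₁, h₂₃⟩ := hx
  exact ⟨by rwa [re_star], by rwa [imI_star, even_neg],
    by rwa [imJ_star, imK_star, ← neg_add, even_neg]⟩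

lemma re_ne_zero_of_mem_parityMonoid {x : ℍ[ℤ]} (hx : x ∈ parityMonoid) : x.re ≠ 0 :=
  fun h ↦ by simpa [h] using hx.1

lemma ne_zero_of_mem_parityMonoid {x : ℍ[ℤ]} (hx : x ∈ parityMonoid) : x ≠ 0 := by
  rintro rfl
  exact re_ne_zero_of_mem_parityMonoid hx rfl

end Quaternion

lemma GammaTilde_subset_parityMonoid {p l : ℕ} (hp : Odd p) (hl : Odd l) :
    GammaTilde p l ⊆ parityMonoid := by
  rintro x ⟨⟨r, s, hrs⟩, h₁, h₃⟩
  have hodd : Odd (normSq x) := by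
    rw [hrs]
    exact (hp.natCast.pow).mul hl.natCast.pow
  obtain ⟨k, hk⟩ := hodd
  rcases (by omega : normSq x % 4 = 1 ∨ normSq x % 4 = 3) with h | h
  · obtain ⟨h₀, h₁, h₂, h₃⟩ := h₁ h
    exact ⟨h₀, h₁, h₂.add h₃⟩
  · obtain ⟨h₁, h₀, h₂, h₃⟩ := h₃ h
    exact ⟨h₀, h₁, h₂.add_odd h₃⟩

section Psi

variable {p l} {cp dp : ℚ_[p]} {cl dl : ℚ_[l]}
  (hcp : cp ^ 2 + dp ^ 2 + 1 = 0) (hcl : cl ^ 2 + dl ^ 2 + 1 = 0)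

lemma psi_mul {x y : ℍ[ℤ]} (hx : x ≠ 0) (hy : y ≠ 0) :
    psi p l cp dp cl dl hcp hcl (x * y)
      = psi p l cp dp cl dl hcp hcl x * psi p l cp dp cl dl hcp hcl y := by
  simp only [psi, psiGL_mul _ hx hy, QuotientGroup.mk_mul, Prod.mk_mul_mk]

lemma psi_intCast {n : ℤ} (hn : n ≠ 0) : psi p l cp dp cl dl hcp hcl n = 1 := by
  simp only [psi, mk_psiGL_intCast _ hn, Prod.mk_eq_one, and_self]

lemma psi_star {x : ℍ[ℤ]} (hx : x ≠ 0) :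
    psi p l cp dp cl dl hcp hcl (star x) = (psi p l cp dp cl dl hcp hcl x)⁻¹ := by
  simp only [psi, mk_psiGL_star _ hx, Prod.inv_mk]

lemma exists_eq_psi_of_mem_Gamma (hp : p ≠ 2) (hl : l ≠ 2) {g : PGL2 ℚ_[p] × PGL2 ℚ_[l]}
    (hg : g ∈ Gamma p l cp dp cl dl hcp hcl) :
    ∃ x ∈ parityMonoid, g = psi p l cp dp cl dl hcp hcl x := by
  induction hg using Subgroup.closure_induction with
  | mem g hg =>
    obtain ⟨x, hx, rfl⟩ := hg
    exact ⟨x, GammaTilde_subset_parityMonoid ((Fact.out : p.Prime).odd_of_ne_two hp)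
      ((Fact.out : l.Prime).odd_of_ne_two hl) hx, rfl⟩
  | one => exact ⟨1, one_mem _, by simpa using (psi_intCast hcp hcl one_ne_zero).symm⟩
  | mul _ _ _ _ ihg ihh =>
    obtain ⟨x, hx, rfl⟩ := ihg
    obtain ⟨y, hy, rfl⟩ := ihh
    exact ⟨x * y, mul_mem hx hy, (psi_mul hcp hcl (ne_zero_of_mem_parityMonoid hx)
      (ne_zero_of_mem_parityMonoid hy)).symm⟩
  | inv _ _ ih =>
    obtain ⟨x, hx, rfl⟩ := ih
    exact ⟨star x, star_mem_parityMonoid hx,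
      (psi_star hcp hcl (ne_zero_of_mem_parityMonoid hx)).symm⟩

end Psi

theorem gamma_commutative_transitive_general (p l : ℕ) [Fact p.Prime] [Fact l.Prime]
    (hp2 : p ≠ 2) (hl2 : l ≠ 2)
    (cp dp : ℚ_[p]) (cl dl : ℚ_[l])
    (hcp : cp ^ 2 + dp ^ 2 + 1 = 0) (hcl : cl ^ 2 + dl ^ 2 + 1 = 0)
    (a b c : PGL2 ℚ_[p] × PGL2 ℚ_[l])
    (ha : a ∈ Gamma p l cp dp cl dl hcp hcl) (hb : b ∈ Gamma p l cp dp cl dl hcp hcl)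
    (hc : c ∈ Gamma p l cp dp cl dl hcp hcl)
    (hb1 : b ≠ 1)
    (hab : a * b = b * a) (hbc : b * c = c * b) :
    a * c = c * a := by
  obtain ⟨x, hx, rfl⟩ := exists_eq_psi_of_mem_Gamma hcp hcl hp2 hl2 ha
  obtain ⟨y, hy, rfl⟩ := exists_eq_psi_of_mem_Gamma hcp hcl hp2 hl2 hb
  obtain ⟨z, hz, rfl⟩ := exists_eq_psi_of_mem_Gamma hcp hcl hp2 hl2 hc
  have hxy : Commute x y := commute_of_commute_mk_psiGL hcp
    (re_ne_zero_of_mem_parityMonoid hx) (ne_zero_of_mem_parityMonoid hy) (congrArg Prod.fst hab)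
  have hzy : Commute z y := commute_of_commute_mk_psiGL hcp
    (re_ne_zero_of_mem_parityMonoid hz) (ne_zero_of_mem_parityMonoid hy)
    (congrArg Prod.fst hbc).symm
  have hy_im : y.im ≠ 0 := fun h ↦ hb1 <| by
    rw [← re_add_im y, h, add_zero]
    exact psi_intCast hcp hcl (re_ne_zero_of_mem_parityMonoid hy)
  rw [← psi_mul hcp hcl (ne_zero_of_mem_parityMonoid hx) (ne_zero_of_mem_parityMonoid hz),
    ← psi_mul hcp hcl (ne_zero_of_mem_parityMonoid hz) (ne_zero_of_mem_parityMonoid hx),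
    (commute_trans_of_im_ne_zero hy_im hxy hzy.symm).eq]

/-- Proposition 2: `Γ` is commutative transitive. -/
theorem gamma_commutative_transitive (p l : ℕ) [Fact p.Prime] [Fact l.Prime]
    (hp2 : p ≠ 2) (hl2 : l ≠ 2) (hpl : p ≠ l)
    (cp dp : ℚ_[p]) (cl dl : ℚ_[l])
    (hcp : cp ^ 2 + dp ^ 2 + 1 = 0) (hcl : cl ^ 2 + dl ^ 2 + 1 = 0)
    (a b c : PGL2 ℚ_[p] × PGL2 ℚ_[l])
    (ha : a ∈ Gamma p l cp dp cl dl hcp hcl) (hb : b ∈ Gamma p l cp dp cl dl hcp hcl)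
    (hc : c ∈ Gamma p l cp dp cl dl hcp hcl)
    (ha1 : a ≠ 1) (hb1 : b ≠ 1) (hc1 : c ≠ 1)
    (hab : a * b = b * a) (hbc : b * c = c * b) :
    a * c = c * a :=
  gamma_commutative_transitive_general p l hp2 hl2 cp dp cl dl hcp hcl a b c ha hb hc hb1 hab hbc
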